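/- Let p be an odd prime and 1 ≤ a' < b' ≤ p−1. Setting a = a', b = b' in ℤ_p, label all elements of ℤ_p other than 0, a, b as follows: elements strictly between 0 and a (in the cyclic order generated by 1) get label z, elements strictly between a and b get label y, and elements strictly between b and p get label x. Then this labeling uses p−b'−1 labels x, b'−a'−1 labels y, a'−1 labels z, and avoids all three forbidden patterns: v labeled x with v+a labeled y; v labeled z with v+b labeled y; v labeled z with v+(b−a) labeled x. -/

import Mathlib

/-- A three-element set of labels. -/
inductive Lab | x | y | z
deriving DecidableEq

/-- The labeling of `ZMod p` used for the spine component in the model `[a,0,b]`: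
elements strictly between `0` and `a'` get `z`, those strictly between `a'` and `b'`
get `y`, those strictly between `b'` and `p` get `x`, and the spine vertices
`0`, `a'`, `b'` get no label. -/
def lab10 (p a' b' : ℕ) [NeZero p] : ZMod p → Option Lab := fun v =>
  if 0 < v.val ∧ v.val < a' then some Lab.z
  else if a' < v.val ∧ v.val < b' then some Lab.y
  else if b' < v.val then some Lab.x
  else none

theorem stmt10 (p a' b' : ℕ) [NeZero p] (hp : p.Prime) (hodd : Odd p)
    (h1 : 1 ≤ a') (h2 : a' < b') (h3 : b' ≤ p - 1) :
    (Finset.univ.filter fun v => lab10 p a' b' v = some Lab.x).card = p - b' - 1 ∧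
    (Finset.univ.filter fun v => lab10 p a' b' v = some Lab.y).card = b' - a' - 1 ∧
    (Finset.univ.filter fun v => lab10 p a' b' v = some Lab.z).card = a' - 1 ∧
    (∀ v : ZMod p, ¬(lab10 p a' b' v = some Lab.x ∧
      lab10 p a' b' (v + (a' : ZMod p)) = some Lab.y)) ∧
    (∀ v : ZMod p, ¬(lab10 p a' b' v = some Lab.z ∧
      lab10 p a' b' (v + (b' : ZMod p)) = some Lab.y)) ∧
    (∀ v : ZMod p, ¬(lab10 p a' b' v = some Lab.z ∧
      lab10 p a' b' (v + ((b' : ZMod p) - (a' : ZMod p))) = some Lab.x)) := by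
  have hp1 : 1 < p := hp.one_lt
  have hb : b' < p := by omega
  have ha : a' < p := by omega
  have hval : ∀ v : ZMod p, v.val < p := fun v => ZMod.val_lt v
  have hxv : ∀ v : ZMod p, (lab10 p a' b' v = some Lab.x ↔ b' < v.val) := by
    intro v; unfold lab10; split_ifs with h1' h2' h3' <;> simp <;> omega
  have hyv : ∀ v : ZMod p, (lab10 p a' b' v = some Lab.y ↔ a' < v.val ∧ v.val < b') := by
    intro v; unfold lab10; split_ifs with h1' h2' h3' <;> simp <;> omega
  have hzv : ∀ v : ZMod p, (lab10 p a' b' v = some Lab.z ↔ 0 < v.val ∧ v.val < a') := by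
    intro v; unfold lab10; split_ifs with h1' h2' h3' <;> simp [-ZMod.val_pos] <;> omega
  have key : ∀ (Q : ℕ → Prop) [DecidablePred Q],
      (Finset.univ.filter fun v : ZMod p => Q v.val).card = ((Finset.range p).filter Q).card := by
    intro Q _
    refine Finset.card_bij' (fun v _ => v.val) (fun n _ => ((n : ℕ) : ZMod p)) ?_ ?_ ?_ ?_
    · intro v hv
      simp only [Finset.mem_filter, Finset.mem_univ, true_and] at hv
      simp only [Finset.mem_filter, Finset.mem_range]
      exact ⟨hval v, hv⟩
    · intro n hn
      simp only [Finset.mem_filter, Finset.mem_range] at hn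
      simp only [Finset.mem_filter, Finset.mem_univ, true_and]
      rw [ZMod.val_cast_of_lt hn.1]; exact hn.2
    · intro v _; exact ZMod.natCast_rightInverse v
    · intro n hn
      simp only [Finset.mem_filter, Finset.mem_range] at hn
      exact ZMod.val_cast_of_lt hn.1
  have hvala : (↑a' : ZMod p).val = a' := ZMod.val_cast_of_lt ha
  have hvalb : (↑b' : ZMod p).val = b' := ZMod.val_cast_of_lt hb
  refine ⟨?_, ?_, ?_, ?_, ?_, ?_⟩
  · have := key (fun n => b' < n)
    simp only [hxv]
    rw [this]
    have : ((Finset.range p).filter fun n => b' < n) = Finset.Ioo b' p := by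
      ext n
      simp only [Finset.mem_filter, Finset.mem_range, Finset.mem_Ioo]
      omega
    rw [this, Nat.card_Ioo]
  · have := key (fun n => a' < n ∧ n < b')
    simp only [hyv]
    rw [this]
    have : ((Finset.range p).filter fun n => a' < n ∧ n < b') = Finset.Ioo a' b' := by
      ext n
      simp only [Finset.mem_filter, Finset.mem_range, Finset.mem_Ioo]
      omega
    rw [this, Nat.card_Ioo]
  · have := key (fun n => 0 < n ∧ n < a')
    simp only [hzv]
    rw [this]
    have : ((Finset.range p).filter fun n => 0 < n ∧ n < a') = Finset.Ioo 0 a' := by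
      ext n
      simp only [Finset.mem_filter, Finset.mem_range, Finset.mem_Ioo]
      omega
    rw [this, Nat.card_Ioo]; omega
  · rintro v ⟨hx, hy⟩
    rw [hxv] at hx
    rw [hyv] at hy
    rw [ZMod.val_add, hvala] at hy
    have hv := hval v
    rcases lt_or_ge (v.val + a') p with h | h
    · rw [Nat.mod_eq_of_lt h] at hy; omega
    · rw [Nat.mod_eq_sub_mod h, Nat.mod_eq_of_lt (by omega)] at hy; omega
  · rintro v ⟨hz, hy⟩
    rw [hzv] at hz
    rw [hyv] at hy
    rw [ZMod.val_add, hvalb] at hy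
    have hv := hval v
    rcases lt_or_ge (v.val + b') p with h | h
    · rw [Nat.mod_eq_of_lt h] at hy; omega
    · rw [Nat.mod_eq_sub_mod h, Nat.mod_eq_of_lt (by omega)] at hy; omega
  · rintro v ⟨hz, hx⟩
    rw [hzv] at hz
    rw [hxv] at hx
    have hcast : (↑b' : ZMod p) - ↑a' = ((b' - a' : ℕ) : ZMod p) := by
      rw [Nat.cast_sub h2.le]
    rw [hcast, ZMod.val_add, ZMod.val_cast_of_lt (by omega : b' - a' < p),
      Nat.mod_eq_of_lt (by omega)] at hx
    omega
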